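/- arXiv:2507.19048 — 2 statements merged into one kernel-verified Lean document; each statement's English description precedes it below -/
import Mathlib

section
/- Let r ≥ 1 and let z = (z₀⁽¹⁾, z₁⁽¹⁾, z₀⁽²⁾, z₀⁽³⁾) ∈ Mat(2r × 4r, ℂ) be written in blocks in Mat(2r × r, ℂ), and assume det(z₀⁽¹⁾ | z₁⁽¹⁾) ≠ 0, det(z₀⁽¹⁾ | z₀⁽²⁾) ≠ 0, det(z₀⁽¹⁾ | z₀⁽³⁾) ≠ 0 and det(z₀⁽²⁾ | z₀⁽³⁾) ≠ 0. Then there exist g ∈ GL(2r, ℂ), h ∈ H_{(2,1,1)}, and x ∈ GL(r, ℂ) such that g · z · h is the 2r×4r matrix with block rows (1_r, 0, 0, 1_r) and (0, x, 1_r, −1_r). -/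
/-!
Multiplying by `g₀ = (z₀⁽¹⁾ | z₀⁽²⁾)⁻¹` turns `z₀⁽¹⁾, z₀⁽²⁾` into `(1; 0), (0; 1)` and the other
two blocks into some `(u; v)`, `(p; q)`; the remaining determinant conditions say exactly that
`v`, `q` and `p` are invertible. With `b = -p q⁻¹`, the element `g = diag(1, b) g₀` together with
`h₀ = 1`, `h₁ = -u`, `k = b⁻¹`, `l = p⁻¹` gives the normal form with `x = b v`.
-/

open Matrix

/-- The `2r × nr` matrix assembled from `n` block columns of size `2r × r`. -/
def ofBlockCols (r n : ℕ) (z : Fin n → Matrix (Fin r ⊕ Fin r) (Fin r) ℂ) :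
    Matrix (Fin r ⊕ Fin r) (Fin n × Fin r) ℂ :=
  Matrix.of fun i jk => z jk.1 i jk.2

/-- The `nr × nr` matrix assembled from an `n × n` array of `r × r` blocks. -/
def ofBlockMat (r n : ℕ) (H : Fin n → Fin n → Matrix (Fin r) (Fin r) ℂ) :
    Matrix (Fin n × Fin r) (Fin n × Fin r) ℂ :=
  Matrix.of fun jk lk => H jk.1 lk.1 jk.2 lk.2

namespace Matrix

lemma fromRows_add_fromRows {R m₁ m₂ p : Type*} [Add R] (A₁ B₁ : Matrix m₁ p R)
    (A₂ B₂ : Matrix m₂ p R) :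
    fromRows A₁ A₂ + fromRows B₁ B₂ = fromRows (A₁ + B₁) (A₂ + B₂) := by
  ext (i | i) j <;> rfl

lemma det_fromBlocks_zero_one {R n : Type*} [CommRing R] [Fintype n] [DecidableEq n]
    (B D : Matrix n n R) :
    (fromBlocks 0 B 1 D).det = Equiv.Perm.sign (Equiv.sumComm n n) * B.det := by
  have h := det_permute (Equiv.sumComm n n) (fromBlocks 0 B 1 D)
  simp only [Equiv.sumComm_apply, fromBlocks_submatrix_sum_swap_left, submatrix_id_id,
    det_fromBlocks_zero₂₁, det_one, one_mul] at h
  rw [h, ← mul_assoc, ← Int.cast_mul, ← Units.val_mul, Int.units_mul_self, Units.val_one,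
    Int.cast_one, one_mul]

lemma det_fromCols_mul_ne_zero {K n₁ n₂ : Type*} [Field K] [Fintype n₁] [Fintype n₂]
    [DecidableEq n₁] [DecidableEq n₂] {X : Matrix (n₁ ⊕ n₂) n₁ K} {Y : Matrix (n₁ ⊕ n₂) n₂ K}
    (g : GL (n₁ ⊕ n₂) K) (h : (fromCols X Y).det ≠ 0) :
    (fromCols (g.val * X) (g.val * Y)).det ≠ 0 := by
  rw [← mul_fromCols, det_mul]
  exact mul_ne_zero g.det_ne_zero h

end Matrix

section NormalForm

variable {K : Type*} [Field K] {n : Type*} [Fintype n] [DecidableEq n]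

/-- `(A, B, C, E)` plays the role of `(z₀⁽¹⁾, z₁⁽¹⁾, z₀⁽²⁾, z₀⁽³⁾)`; the factor `h₀` of the
`J(2)`-block of `H_{(2,1,1)}` is taken to be `1`. -/
def HasNormalForm211 (A B C E : Matrix (n ⊕ n) n K) : Prop :=
  ∃ (g : GL (n ⊕ n) K) (h₁ : Matrix n n K) (k l x : GL n K),
    (g : Matrix (n ⊕ n) (n ⊕ n) K) * A = fromRows 1 0 ∧
    (g : Matrix (n ⊕ n) (n ⊕ n) K) * (A * h₁ + B) = fromRows 0 x ∧
    (g : Matrix (n ⊕ n) (n ⊕ n) K) * C * (k : Matrix n n K) = fromRows 0 1 ∧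
    (g : Matrix (n ⊕ n) (n ⊕ n) K) * E * (l : Matrix n n K) = fromRows 1 (-1)

lemma HasNormalForm211.of_mul {A B C E : Matrix (n ⊕ n) n K} (g₀ : GL (n ⊕ n) K)
    (h : HasNormalForm211 (g₀.val * A) (g₀.val * B) (g₀.val * C) (g₀.val * E)) :
    HasNormalForm211 A B C E := by
  obtain ⟨g, h₁, k, l, x, hA, hB, hC, hE⟩ := h
  refine ⟨g * g₀, h₁, k, l, x, ?_⟩
  simp only [Units.val_mul, Matrix.mul_assoc, Matrix.mul_add] at hA hB hC hE ⊢
  exact ⟨hA, hB, hC, hE⟩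

lemma hasNormalForm211_fromRows (u : Matrix n n K) (v p q : GL n K) :
    HasNormalForm211 (fromRows 1 0) (fromRows u v) (fromRows 0 1) (fromRows p q) := by
  set b : GL n K := -(p * q⁻¹)
  have hb : (b : Matrix n n K) * q * (p : Matrix n n K)⁻¹ = -1 := by
    rw [← coe_units_inv, ← Units.val_mul, ← Units.val_mul]
    simp [b, mul_assoc]
  refine ⟨.mkOfDetNeZero (fromBlocks 1 0 0 b) (by simpa using b.det_ne_zero), -u, b⁻¹, p⁻¹,
    b * v, ?_, ?_, ?_, ?_⟩
  all_goals
    simp only [GeneralLinearGroup.val_mkOfDetNeZero, fromBlocks_mul_fromRows, fromRows_mul,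
      fromRows_add_fromRows]
    simp [hb]

theorem hasNormalForm211_of_det_ne_zero {A B C E : Matrix (n ⊕ n) n K}
    (hAB : (fromCols A B).det ≠ 0) (hAC : (fromCols A C).det ≠ 0)
    (hAE : (fromCols A E).det ≠ 0) (hCE : (fromCols C E).det ≠ 0) :
    HasNormalForm211 A B C E := by
  set g₀ := (GeneralLinearGroup.mkOfDetNeZero _ hAC)⁻¹
  have hg₀ : fromCols (g₀.val * A) (g₀.val * C) = fromCols (fromRows 1 0) (fromRows 0 1) := by
    rw [← mul_fromCols, fromCols_fromRows_eq_fromBlocks, fromBlocks_one]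
    exact Units.inv_mul _
  obtain ⟨hA, hC⟩ := fromCols_inj.eq_iff.mp hg₀
  obtain ⟨u, v, huv⟩ : ∃ u v, g₀.val * B = fromRows u v := ⟨_, _, (fromRows_toRows _).symm⟩
  obtain ⟨p, q, hpq⟩ : ∃ p q, g₀.val * E = fromRows p q := ⟨_, _, (fromRows_toRows _).symm⟩
  have hv : v.det ≠ 0 := by
    have h := det_fromCols_mul_ne_zero g₀ hAB
    rwa [hA, huv, fromCols_fromRows_eq_fromBlocks, det_fromBlocks_zero₂₁, det_one, one_mul] at h
  have hq : q.det ≠ 0 := by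
    have h := det_fromCols_mul_ne_zero g₀ hAE
    rwa [hA, hpq, fromCols_fromRows_eq_fromBlocks, det_fromBlocks_zero₂₁, det_one, one_mul] at h
  have hp : p.det ≠ 0 := by
    have h := det_fromCols_mul_ne_zero g₀ hCE
    rw [hC, hpq, fromCols_fromRows_eq_fromBlocks, det_fromBlocks_zero_one] at h
    exact right_ne_zero_of_mul h
  refine HasNormalForm211.of_mul g₀ ?_
  rw [hA, hC, huv, hpq]
  exact hasNormalForm211_fromRows u (.mkOfDetNeZero v hv) (.mkOfDetNeZero p hp)
    (.mkOfDetNeZero q hq)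

end NormalForm

lemma mul_ofBlockCols (r n : ℕ) (g : Matrix (Fin r ⊕ Fin r) (Fin r ⊕ Fin r) ℂ)
    (z : Fin n → Matrix (Fin r ⊕ Fin r) (Fin r) ℂ) :
    g * ofBlockCols r n z = ofBlockCols r n fun j => g * z j := by
  ext i ⟨j, k⟩
  simp [ofBlockCols, mul_apply]

lemma ofBlockCols_mul_ofBlockMat (r n : ℕ) (z : Fin n → Matrix (Fin r ⊕ Fin r) (Fin r) ℂ)
    (H : Fin n → Fin n → Matrix (Fin r) (Fin r) ℂ) :
    ofBlockCols r n z * ofBlockMat r n H = ofBlockCols r n fun j => ∑ i, z i * H i j := by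
  ext i ⟨j, k⟩
  simp only [ofBlockCols, ofBlockMat, mul_apply, of_apply, Fintype.sum_prod_type,
    Matrix.sum_apply]

theorem normal_form_partition_211_first_general (r : ℕ)
    (z : Fin 4 → Matrix (Fin r ⊕ Fin r) (Fin r) ℂ)
    (h01 : (fromCols (z 0) (z 1)).det ≠ 0)
    (h02 : (fromCols (z 0) (z 2)).det ≠ 0)
    (h03 : (fromCols (z 0) (z 3)).det ≠ 0)
    (h23 : (fromCols (z 2) (z 3)).det ≠ 0) :
    ∃ (g : GL (Fin r ⊕ Fin r) ℂ) (h₀ k l : GL (Fin r) ℂ)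
      (h₁ : Matrix (Fin r) (Fin r) ℂ) (x : GL (Fin r) ℂ),
      (g : Matrix (Fin r ⊕ Fin r) (Fin r ⊕ Fin r) ℂ) * ofBlockCols r 4 z *
          ofBlockMat r 4
            ![![(h₀ : Matrix (Fin r) (Fin r) ℂ), h₁, 0, 0],
              ![0, (h₀ : Matrix (Fin r) (Fin r) ℂ), 0, 0],
              ![0, 0, (k : Matrix (Fin r) (Fin r) ℂ), 0],
              ![0, 0, 0, (l : Matrix (Fin r) (Fin r) ℂ)]] =
        ofBlockCols r 4
          ![fromRows 1 0, fromRows 0 (x : Matrix (Fin r) (Fin r) ℂ),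
            fromRows 0 1, fromRows 1 (-1)] := by
  obtain ⟨g, h₁, k, l, x, hA, hB, hC, hE⟩ := hasNormalForm211_of_det_ne_zero h01 h02 h03 h23
  refine ⟨g, 1, k, l, h₁, x, ?_⟩
  rw [mul_ofBlockCols, ofBlockCols_mul_ofBlockMat]
  congr 1
  funext j
  fin_cases j <;>
    simp only [Units.val_one, Fin.zero_eta, Fin.mk_one, Fin.reduceFinMk, Fin.isValue, cons_val',
      cons_val, cons_val_zero, cons_val_one, cons_val_fin_one, Fin.sum_univ_four,
      Matrix.mul_one, Matrix.mul_zero, add_zero, zero_add]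
  exacts [hA, by simpa only [Matrix.mul_add, Matrix.mul_assoc] using hB, hC, hE]

/-- Normal form lemma (form `x₁`) for `(m, N) = (2r, 4r)`, partition `λ = (2,1,1)`:
`z = (z₀⁽¹⁾, z₁⁽¹⁾, z₀⁽²⁾, z₀⁽³⁾)` with the stated nondegeneracy conditions can be
brought, by the action of `GL(2r, ℂ) × H_{(2,1,1)}`, to the normal form with block rows
`(1_r, 0, 0, 1_r)` and `(0, x, 1_r, −1_r)` with `x ∈ GL(r, ℂ)`. -/
theorem normal_form_partition_211_first (r : ℕ) (hr : 1 ≤ r)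
    (z : Fin 4 → Matrix (Fin r ⊕ Fin r) (Fin r) ℂ)
    (h01 : (fromCols (z 0) (z 1)).det ≠ 0)
    (h02 : (fromCols (z 0) (z 2)).det ≠ 0)
    (h03 : (fromCols (z 0) (z 3)).det ≠ 0)
    (h23 : (fromCols (z 2) (z 3)).det ≠ 0) :
    ∃ (g : GL (Fin r ⊕ Fin r) ℂ) (h₀ k l : GL (Fin r) ℂ)
      (h₁ : Matrix (Fin r) (Fin r) ℂ) (x : GL (Fin r) ℂ),
      (g : Matrix (Fin r ⊕ Fin r) (Fin r ⊕ Fin r) ℂ) * ofBlockCols r 4 z *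
          ofBlockMat r 4
            ![![(h₀ : Matrix (Fin r) (Fin r) ℂ), h₁, 0, 0],
              ![0, (h₀ : Matrix (Fin r) (Fin r) ℂ), 0, 0],
              ![0, 0, (k : Matrix (Fin r) (Fin r) ℂ), 0],
              ![0, 0, 0, (l : Matrix (Fin r) (Fin r) ℂ)]] =
        ofBlockCols r 4
          ![fromRows 1 0, fromRows 0 (x : Matrix (Fin r) (Fin r) ℂ),
            fromRows 0 1, fromRows 1 (-1)] :=
  normal_form_partition_211_first_general r z h01 h02 h03 h23
end

section
/- Let r ≥ 1, n ≥ 3, and let z = (z₁, …, zₙ) ∈ Mat(2r × nr, ℂ) be written in blocks zⱼ ∈ Mat(2r × r, ℂ), and assume det(zᵢ | zⱼ) ≠ 0 for all 1 ≤ i < j ≤ n. Then there exist g ∈ GL(2r, ℂ), h₁, …, hₙ ∈ GL(r, ℂ), and x₄, …, xₙ ∈ Mat(r×r, ℂ) satisfying det xⱼ ≠ 0, det(1_r − xⱼ) ≠ 0 for all 4 ≤ j ≤ n and det(xᵢ − xⱼ) ≠ 0 for all 4 ≤ i ≠ j ≤ n, such that g · z · diag(h₁, …, hₙ) is the 2r×nr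 matrix with block rows (1_r, 0, 1_r, 1_r, …, 1_r) and (0, 1_r, −1_r, −x₄, …, −xₙ). -/
/-!
With `g = (z₁ | z₂)⁻¹` the first two block columns become `(1; 0)` and `(0; 1)`. Pairing any
other block column `(aⱼ; bⱼ)` with `(0; 1)` shows that `aⱼ` is invertible, and pairing `(a₃; b₃)`
with `(1; 0)` shows that `b₃` is. Scaling each block column `j ≠ 2` by `aⱼ⁻¹` and the lower block
row by `−a₃b₃⁻¹` puts these columns in the form `(1; −xⱼ)`, with `x₁ = 0` and `x₃ = 1`. The action
preserves the pairwise conditions, and `det((1, 1); (−xᵢ, −xⱼ)) = det(xᵢ − xⱼ)` turns them into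
the conditions on `x`.
-/

open Matrix

theorem fromCols_mul_mul {R p q n₁ n₂ : Type*} [Semiring R] [Fintype q] [Fintype n₁] [Fintype n₂]
    (g : Matrix p q R) (u : Matrix q n₁ R) (v : Matrix q n₂ R) (h : Matrix n₁ n₁ R)
    (k : Matrix n₂ n₂ R) :
    fromCols (g * u * h) (g * v * k) = g * fromCols u v * fromBlocks h 0 0 k := by
  simp [Matrix.mul_assoc, ← mul_fromCols, fromCols_mul_fromBlocks]

section BlockDeterminants

variable {R m : Type*} [CommRing R] [Fintype m] [DecidableEq m]

theorem det_fromCols_comm (u v : Matrix (m ⊕ m) m R) :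
    (fromCols v u).det = Equiv.Perm.sign (Equiv.sumComm m m) * (fromCols u v).det := by
  rw [← det_permute']
  congr 1
  ext i (k | k) <;> rfl

theorem det_fromCols_fromRows_zero_one (a b : Matrix m m R) :
    (fromCols (fromRows a b) (fromRows 0 1)).det = a.det := by
  simp [fromCols_fromRows_eq_fromBlocks]

theorem det_fromCols_fromRows_one_zero (a b : Matrix m m R) :
    (fromCols (fromRows 1 0) (fromRows a b)).det = b.det := by
  simp [fromCols_fromRows_eq_fromBlocks]

theorem det_fromCols_fromRows_one_neg (x y : Matrix m m R) :
    (fromCols (fromRows 1 (-x)) (fromRows 1 (-y))).det = (x - y).det := by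
  simp [fromCols_fromRows_eq_fromBlocks, sub_eq_neg_add, add_comm]

end BlockDeterminants

section Normalize

variable {K : Type*} [Field K] {m ι : Type*} [Fintype m] [DecidableEq m]

theorem pairwise_det_fromCols_ne_zero_of_lt [LinearOrder ι] {w : ι → Matrix (m ⊕ m) m K}
    (hw : ∀ i j, i < j → (fromCols (w i) (w j)).det ≠ 0) :
    Pairwise fun i j => (fromCols (w i) (w j)).det ≠ 0 := by
  intro i j hij
  rcases hij.lt_or_gt with hlt | hgt
  · exact hw i j hlt
  · rw [det_fromCols_comm]
    exact mul_ne_zero ((Equiv.Perm.sign _).isUnit.map (Int.castRingHom K)).ne_zero (hw j i hgt)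

theorem Pairwise.det_fromCols_GL_mul_mul {w : ι → Matrix (m ⊕ m) m K}
    (hw : Pairwise fun i j => (fromCols (w i) (w j)).det ≠ 0)
    (g : GL (m ⊕ m) K) (h : ι → GL m K) :
    Pairwise fun i j =>
      (fromCols ((g : Matrix (m ⊕ m) (m ⊕ m) K) * w i * (h i : Matrix m m K))
        ((g : Matrix (m ⊕ m) (m ⊕ m) K) * w j * (h j : Matrix m m K))).det ≠ 0 := by
  intro i j hij
  rw [fromCols_mul_mul, det_mul, det_mul, det_fromBlocks_zero₂₁]
  exact mul_ne_zero (mul_ne_zero g.det_ne_zero (hw hij))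
    (mul_ne_zero (h i).det_ne_zero (h j).det_ne_zero)

theorem exists_GL_mul_eq_fromRows {u v : Matrix (m ⊕ m) m K} (huv : (fromCols u v).det ≠ 0) :
    ∃ g : GL (m ⊕ m) K, (g : Matrix (m ⊕ m) (m ⊕ m) K) * u = fromRows 1 0 ∧
      (g : Matrix (m ⊕ m) (m ⊕ m) K) * v = fromRows 0 1 := by
  refine ⟨(GeneralLinearGroup.mkOfDetNeZero _ huv)⁻¹, fromCols_inj ?_⟩
  rw [← mul_fromCols, fromCols_fromRows_eq_fromBlocks, fromBlocks_one]
  simp [nonsing_inv_mul _ huv.isUnit]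

theorem exists_GL_normalize_of_eq_fromRows {w : ι → Matrix (m ⊕ m) m K}
    (hw : Pairwise fun i j => (fromCols (w i) (w j)).det ≠ 0) {i₀ i₁ i₂ : ι}
    (h₀₂ : i₀ ≠ i₂) (h₁₂ : i₁ ≠ i₂) (hw₀ : w i₀ = fromRows 1 0) (hw₁ : w i₁ = fromRows 0 1) :
    ∃ (g : GL (m ⊕ m) K) (h : ι → GL m K) (x : ι → Matrix m m K),
      (g : Matrix (m ⊕ m) (m ⊕ m) K) * w i₁ * (h i₁ : Matrix m m K) = fromRows 0 1 ∧
      (∀ j, j ≠ i₁ →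
        (g : Matrix (m ⊕ m) (m ⊕ m) K) * w j * (h j : Matrix m m K) = fromRows 1 (-x j)) ∧
      x i₀ = 0 ∧ x i₂ = 1 := by
  classical
  set a := fun j => (w j).toRows₁
  set b := fun j => (w j).toRows₂
  have hab : ∀ j, w j = fromRows (a j) (b j) := fun j => (fromRows_toRows _).symm
  have ha : ∀ j, j ≠ i₁ → (a j).det ≠ 0 := fun j hj => by
    simpa only [hab j, hw₁, det_fromCols_fromRows_zero_one] using hw hj
  have hb₂ : (b i₂).det ≠ 0 := by
    simpa only [hw₀, hab i₂, det_fromCols_fromRows_one_zero] using hw h₀₂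
  let C : GL m K := .mkOfDetNeZero (a i₂) (ha i₂ h₁₂.symm) * (.mkOfDetNeZero (b i₂) hb₂)⁻¹
  let g : GL (m ⊕ m) K := .mkOfDetNeZero (fromBlocks 1 0 0 (-C : GL m K))
    (by simpa using (-C).det_ne_zero)
  let h : ι → GL m K := fun j => if hj : j = i₁ then -C⁻¹ else (.mkOfDetNeZero (a j) (ha j hj))⁻¹
  refine ⟨g, h, fun j => C * b j * (a j)⁻¹, ?_, fun j hj => ?_, ?_, ?_⟩
  · simp [g, h, hw₁, fromBlocks_mul_fromRows, fromRows_mul]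
  · rw [hab j]
    simp [g, h, hj, fromBlocks_mul_fromRows, fromRows_mul, mul_nonsing_inv _ (ha j hj).isUnit]
  · simp [b, hw₀]
  · simp [C, Matrix.mul_assoc, nonsing_inv_mul _ hb₂.isUnit,
      mul_nonsing_inv _ (ha i₂ h₁₂.symm).isUnit]

theorem exists_GL_normalize {w : ι → Matrix (m ⊕ m) m K}
    (hw : Pairwise fun i j => (fromCols (w i) (w j)).det ≠ 0) {i₀ i₁ i₂ : ι}
    (h₀₁ : i₀ ≠ i₁) (h₀₂ : i₀ ≠ i₂) (h₁₂ : i₁ ≠ i₂) :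
    ∃ (g : GL (m ⊕ m) K) (h : ι → GL m K) (x : ι → Matrix m m K),
      (g : Matrix (m ⊕ m) (m ⊕ m) K) * w i₁ * (h i₁ : Matrix m m K) = fromRows 0 1 ∧
      (∀ j, j ≠ i₁ →
        (g : Matrix (m ⊕ m) (m ⊕ m) K) * w j * (h j : Matrix m m K) = fromRows 1 (-x j)) ∧
      x i₀ = 0 ∧ x i₂ = 1 := by
  obtain ⟨g₁, hw₀, hw₁⟩ := exists_GL_mul_eq_fromRows (hw h₀₁)
  obtain ⟨g₂, h, x, hg₁, hg, hx₀, hx₂⟩ := exists_GL_normalize_of_eq_fromRows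
    (w := fun j => (g₁ : Matrix (m ⊕ m) (m ⊕ m) K) * w j)
    (by simpa using hw.det_fromCols_GL_mul_mul g₁ 1) h₀₂ h₁₂ hw₀ hw₁
  refine ⟨g₂ * g₁, h, x, ?_, fun j hj => ?_, hx₀, hx₂⟩
  · simpa [Matrix.mul_assoc] using hg₁
  · simpa [Matrix.mul_assoc] using hg j hj

end Normalize

theorem mul_ofBlockCols_mul_ofBlockMat_diag (r n : ℕ)
    (g : Matrix (Fin r ⊕ Fin r) (Fin r ⊕ Fin r) ℂ)
    (z : Fin n → Matrix (Fin r ⊕ Fin r) (Fin r) ℂ) (h : Fin n → Matrix (Fin r) (Fin r) ℂ) :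
    g * ofBlockCols r n z * ofBlockMat r n (fun i j => if i = j then h i else 0) =
      ofBlockCols r n (fun j => g * z j * h j) := by
  ext i ⟨j, k⟩
  simp [ofBlockCols, ofBlockMat, Matrix.mul_apply, Fintype.sum_prod_type, Matrix.ite_apply]

theorem normal_form_partition_ones_general (r n : ℕ) (hn : 3 ≤ n)
    (z : Fin n → Matrix (Fin r ⊕ Fin r) (Fin r) ℂ)
    (hz : ∀ i j : Fin n, i < j → (fromCols (z i) (z j)).det ≠ 0) :
    ∃ (g : GL (Fin r ⊕ Fin r) ℂ) (h : Fin n → GL (Fin r) ℂ)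
      (x : Fin n → Matrix (Fin r) (Fin r) ℂ),
      (∀ j : Fin n, 3 ≤ (j : ℕ) →
        (x j).det ≠ 0 ∧ ((1 : Matrix (Fin r) (Fin r) ℂ) - x j).det ≠ 0) ∧
      (∀ i j : Fin n, 3 ≤ (i : ℕ) → 3 ≤ (j : ℕ) → i ≠ j → (x i - x j).det ≠ 0) ∧
      (g : Matrix (Fin r ⊕ Fin r) (Fin r ⊕ Fin r) ℂ) * ofBlockCols r n z *
          ofBlockMat r n (fun i j => if i = j then (h i : Matrix (Fin r) (Fin r) ℂ) else 0) =
        ofBlockCols r n (fun j =>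
          if (j : ℕ) = 0 then fromRows 1 0
          else if (j : ℕ) = 1 then fromRows 0 1
          else if (j : ℕ) = 2 then fromRows 1 (-1)
          else fromRows 1 (-(x j))) := by
  obtain ⟨i₀, hi₀⟩ : ∃ i : Fin n, (i : ℕ) = 0 := ⟨⟨0, by omega⟩, rfl⟩
  obtain ⟨i₁, hi₁⟩ : ∃ i : Fin n, (i : ℕ) = 1 := ⟨⟨1, by omega⟩, rfl⟩
  obtain ⟨i₂, hi₂⟩ : ∃ i : Fin n, (i : ℕ) = 2 := ⟨⟨2, by omega⟩, rfl⟩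
  have hpair := pairwise_det_fromCols_ne_zero_of_lt hz
  obtain ⟨g, h, x, hg₁, hg, hx₀, hx₂⟩ :=
    exists_GL_normalize hpair (i₀ := i₀) (i₁ := i₁) (i₂ := i₂) (by omega) (by omega) (by omega)
  have hx : ∀ i j, i ≠ i₁ → j ≠ i₁ → i ≠ j → (x i - x j).det ≠ 0 := fun i j hi hj hij => by
    simpa only [hg i hi, hg j hj, det_fromCols_fromRows_one_neg] using
      hpair.det_fromCols_GL_mul_mul g h hij
  refine ⟨g, h, x, fun j hj => ⟨?_, ?_⟩, fun i j hi hj => hx i j (by omega) (by omega), ?_⟩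
  · simpa [hx₀, det_neg] using hx i₀ j (by omega) (by omega) (by omega)
  · simpa [hx₂] using hx i₂ j (by omega) (by omega) (by omega)
  rw [mul_ofBlockCols_mul_ofBlockMat_diag]
  congr 1
  funext j
  split_ifs
  · rw [hg j (by omega), show j = i₀ by omega, hx₀, neg_zero]
  · rwa [show j = i₁ by omega]
  · rw [hg j (by omega), show j = i₂ by omega, hx₂]
  · exact hg j (by omega)

/-- Normal form lemma for `(m, N) = (2r, nr)`, `n ≥ 3`, partition `λ = (1, …, 1)`:
any `z = (z₁, …, zₙ)` with `det(zᵢ | zⱼ) ≠ 0` for `i < j` can be brought, by the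
action of `GL(2r, ℂ) × H_{(1,…,1)}`, to the normal form with block rows
`(1_r, 0, 1_r, 1_r, …, 1_r)` and `(0, 1_r, −1_r, −x₄, …, −xₙ)`, where
`det xⱼ ≠ 0`, `det(1_r − xⱼ) ≠ 0`, and `det(xᵢ − xⱼ) ≠ 0` for `i ≠ j`
(blocks indexed from `0`, so the `x`-blocks carry indices `3 ≤ j ≤ n − 1`). -/
theorem normal_form_partition_ones (r n : ℕ) (hr : 1 ≤ r) (hn : 3 ≤ n)
    (z : Fin n → Matrix (Fin r ⊕ Fin r) (Fin r) ℂ)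
    (hz : ∀ i j : Fin n, i < j → (fromCols (z i) (z j)).det ≠ 0) :
    ∃ (g : GL (Fin r ⊕ Fin r) ℂ) (h : Fin n → GL (Fin r) ℂ)
      (x : Fin n → Matrix (Fin r) (Fin r) ℂ),
      (∀ j : Fin n, 3 ≤ (j : ℕ) →
        (x j).det ≠ 0 ∧ ((1 : Matrix (Fin r) (Fin r) ℂ) - x j).det ≠ 0) ∧
      (∀ i j : Fin n, 3 ≤ (i : ℕ) → 3 ≤ (j : ℕ) → i ≠ j → (x i - x j).det ≠ 0) ∧
      (g : Matrix (Fin r ⊕ Fin r) (Fin r ⊕ Fin r) ℂ) * ofBlockCols r n z *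
          ofBlockMat r n (fun i j => if i = j then (h i : Matrix (Fin r) (Fin r) ℂ) else 0) =
        ofBlockCols r n (fun j =>
          if (j : ℕ) = 0 then fromRows 1 0
          else if (j : ℕ) = 1 then fromRows 0 1
          else if (j : ℕ) = 2 then fromRows 1 (-1)
          else fromRows 1 (-(x j))) :=
  normal_form_partition_ones_general r n hn z hz
end
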